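/- For qubit preparations with Bloch vectors S_{x0x1} ∈ ℝ³ (‖S_{x0x1}‖ ≤ 1) and measurement Bloch vectors T_y ∈ ℝ³ (‖T_y‖ ≤ 1), if the probabilities are p(0|x0x1,y) = (1 + S_{x0x1}·T_y)/2, then the witness W equals (1/4)·det[[ (S_{00}−S_{01})·T_0, (S_{10}−S_{11})·T_0 ], [ (S_{00}−S_{01})·T_1, (S_{10}−S_{11})·T_1 ]], and W = 0 whenever T_0 and T_1 are parallel. -/

import Mathlib

/-- Euclidean dot product on ℝ³. -/
def dot3 (u v : Fin 3 → ℝ) : ℝ := ∑ i, u i * v i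

/-- Bloch-vector probabilities p(0|x0x1,y) = (1 + S_{x0x1}·T_y)/2. -/
noncomputable def blochProb (S : Fin 2 → Fin 2 → Fin 3 → ℝ) (T : Fin 2 → Fin 3 → ℝ)
    (x0 x1 y : Fin 2) : ℝ :=
  (1 + dot3 (S x0 x1) (T y)) / 2

/-- The nonlinear dimension witness W. -/
noncomputable def Wwitness (S : Fin 2 → Fin 2 → Fin 3 → ℝ) (T : Fin 2 → Fin 3 → ℝ) : ℝ :=
  (blochProb S T 0 0 0 - blochProb S T 0 1 0) * (blochProb S T 1 0 1 - blochProb S T 1 1 1)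
    - (blochProb S T 1 0 0 - blochProb S T 1 1 0) * (blochProb S T 0 0 1 - blochProb S T 0 1 1)

/-! Each entry of `W` is a difference of probabilities in which the constant term `1/2` cancels,
leaving half of a dot product; `W` is thus a 2×2 determinant that is bilinear in the `T y`, so it
vanishes when `T 0` and `T 1` are parallel. -/

lemma dot3_eq_dotProduct (u v : Fin 3 → ℝ) : dot3 u v = u ⬝ᵥ v := rfl

lemma dot3_sub_left (u v w : Fin 3 → ℝ) :
    dot3 (fun i => u i - v i) w = dot3 u w - dot3 v w :=
  sub_dotProduct u v w

lemma dot3_eq_mul_of_eq_smul {u v w : Fin 3 → ℝ} {k : ℝ} (h : ∀ i, w i = k * v i) :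
    dot3 u w = k * dot3 u v := by
  have hw : w = k • v := funext h
  rw [dot3_eq_dotProduct, dot3_eq_dotProduct, hw, dotProduct_smul, smul_eq_mul]

lemma blochProb_sub_blochProb (S : Fin 2 → Fin 2 → Fin 3 → ℝ) (T : Fin 2 → Fin 3 → ℝ)
    (x0 y : Fin 2) :
    blochProb S T x0 0 y - blochProb S T x0 1 y
      = dot3 (fun i => S x0 0 i - S x0 1 i) (T y) / 2 := by
  rw [blochProb, blochProb, dot3_sub_left]
  ring

lemma Wwitness_eq_det (S : Fin 2 → Fin 2 → Fin 3 → ℝ) (T : Fin 2 → Fin 3 → ℝ) :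
    Wwitness S T = (1/4) *
      (dot3 (fun i => S 0 0 i - S 0 1 i) (T 0) * dot3 (fun i => S 1 0 i - S 1 1 i) (T 1)
        - dot3 (fun i => S 1 0 i - S 1 1 i) (T 0) * dot3 (fun i => S 0 0 i - S 0 1 i) (T 1)) := by
  simp only [Wwitness, blochProb_sub_blochProb]
  ring

lemma dot3_det_eq_zero_of_parallel (u v a b : Fin 3 → ℝ) {k : ℝ}
    (h : (∀ i, b i = k * a i) ∨ (∀ i, a i = k * b i)) :
    dot3 u a * dot3 v b - dot3 v a * dot3 u b = 0 := by
  rcases h with h | h <;>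
  · rw [dot3_eq_mul_of_eq_smul h, dot3_eq_mul_of_eq_smul h]
    ring

theorem witness_bloch_formula_general (S : Fin 2 → Fin 2 → Fin 3 → ℝ) (T : Fin 2 → Fin 3 → ℝ) :
    Wwitness S T = (1/4) *
      (dot3 (fun i => S 0 0 i - S 0 1 i) (T 0) * dot3 (fun i => S 1 0 i - S 1 1 i) (T 1)
        - dot3 (fun i => S 1 0 i - S 1 1 i) (T 0) * dot3 (fun i => S 0 0 i - S 0 1 i) (T 1))
    ∧ (∀ k : ℝ, ((∀ i, T 1 i = k * T 0 i) ∨ (∀ i, T 0 i = k * T 1 i)) → Wwitness S T = 0) := by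
  refine ⟨Wwitness_eq_det S T, fun k hk => ?_⟩
  rw [Wwitness_eq_det, dot3_det_eq_zero_of_parallel _ _ _ _ hk, mul_zero]

theorem witness_bloch_formula (S : Fin 2 → Fin 2 → Fin 3 → ℝ) (T : Fin 2 → Fin 3 → ℝ)
    (hS : ∀ x0 x1, dot3 (S x0 x1) (S x0 x1) ≤ 1)
    (hT : ∀ y, dot3 (T y) (T y) ≤ 1) :
    Wwitness S T = (1/4) *
      (dot3 (fun i => S 0 0 i - S 0 1 i) (T 0) * dot3 (fun i => S 1 0 i - S 1 1 i) (T 1)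
        - dot3 (fun i => S 1 0 i - S 1 1 i) (T 0) * dot3 (fun i => S 0 0 i - S 0 1 i) (T 1))
    ∧ (∀ k : ℝ, ((∀ i, T 1 i = k * T 0 i) ∨ (∀ i, T 0 i = k * T 1 i)) → Wwitness S T = 0) :=
  witness_bloch_formula_general S T
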